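/- arXiv:2508.16993 — 2 statements merged into one kernel-verified Lean document; each statement's English description precedes it below -/
import Mathlib

section
/- For every integer k ≥ 2, the central binomial coefficient satisfies C(k, ⌊k/2⌋) ≤ 2^k·√(2·e^{1/6}/(π·(k−1))). -/
open Real Nat

/-!
Wallis' partial product is `W n = 16ⁿ / ((2n+1) C(2n,n)²)`, and its lower bound
`W n ≥ (2n+1)/(2n+2) · π/2` gives `π n C(2n,n)² ≤ 16ⁿ`. For odd `k` the middle coefficient
`C(k, ⌊k/2⌋)` is half of `C(k+1, (k+1)/2)`, so in either parity `π ⌈k/2⌉ C(k, ⌊k/2⌋)² ≤ 4ᵏ`;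
since `k - 1 < 2⌈k/2⌉` and `e^{1/6} ≥ 1`, this is stronger than the claim.
-/

theorem Nat.choose_half_mul_two_pow_mod_two (k : ℕ) :
    k.choose (k / 2) * 2 ^ (k % 2) = centralBinom ((k + 1) / 2) := by
  obtain ⟨n, rfl | rfl⟩ := k.even_or_odd'
  · simp [centralBinom_eq_two_mul_choose, show (2 * n + 1) / 2 = n by omega]
  · rw [centralBinom_eq_two_mul_choose, show (2 * n + 1) / 2 = n by omega,
      show (2 * n + 1 + 1) / 2 = n + 1 by omega, show 2 * (n + 1) = 2 * n + 1 + 1 by ring,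
      choose_succ_succ, choose_symm_half, Nat.add_mod]
    simp [mul_two]

theorem Real.Wallis.W_mul_centralBinom_sq (n : ℕ) :
    Wallis.W n * (2 * n + 1) * (centralBinom n : ℝ) ^ 2 = 16 ^ n := by
  have hfac : centralBinom n * n ! * n ! = (2 * n)! := by
    simpa [centralBinom_eq_two_mul_choose, two_mul] using
      choose_mul_factorial_mul_factorial (le_add_left n n)
  have hC : (centralBinom n : ℝ) ≠ 0 := by exact_mod_cast centralBinom_ne_zero n
  rw [Wallis.W_eq_factorial_ratio, ← hfac, pow_mul]
  push_cast
  field_simp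
  norm_num

theorem Nat.pi_mul_mul_centralBinom_sq_le_sixteen_pow (n : ℕ) :
    π * n * (centralBinom n : ℝ) ^ 2 ≤ 16 ^ n := by
  rw [← Wallis.W_mul_centralBinom_sq]
  gcongr ?_ * _
  have h := Wallis.le_W n
  rw [div_mul_eq_mul_div, div_le_iff₀ (by positivity)] at h
  nlinarith [pi_pos]

theorem Nat.pi_mul_mul_choose_half_sq_le_four_pow (k : ℕ) :
    π * ((k + 1) / 2 : ℕ) * (k.choose (k / 2) : ℝ) ^ 2 ≤ 4 ^ k := by
  have h := pi_mul_mul_centralBinom_sq_le_sixteen_pow ((k + 1) / 2)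
  have h16 : (16 : ℝ) ^ ((k + 1) / 2) = 4 ^ k * 4 ^ (k % 2) := by
    rw [show (16 : ℝ) = 4 ^ 2 by norm_num, ← pow_mul, ← pow_add]
    congr 1
    omega
  rw [← choose_half_mul_two_pow_mod_two, h16] at h
  push_cast at h
  rw [mul_pow, ← pow_mul, mul_comm (k % 2), pow_mul, ← mul_assoc,
    show (2 : ℝ) ^ 2 = 4 by norm_num] at h
  exact le_of_mul_le_mul_right h (by positivity)

/-- For every integer `k ≥ 2`, `C(k, ⌊k/2⌋) ≤ 2^k·√(2·e^(1/6)/(π·(k−1)))`. -/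
theorem central_binom_upper (k : ℕ) (hk : 2 ≤ k) :
    (k.choose (k / 2) : ℝ) ≤ 2 ^ k * Real.sqrt (2 * Real.exp (1 / 6) / (Real.pi * (k - 1 : ℝ))) := by
  set C : ℝ := ((k.choose (k / 2) : ℕ) : ℝ)
  have hk1 : (0 : ℝ) < k - 1 := by
    have : (2 : ℝ) ≤ k := by exact_mod_cast hk
    linarith
  have hpos : 0 < π * (k - 1) := by positivity
  have hj : (k - 1 : ℝ) ≤ 2 * ((k + 1) / 2 : ℕ) := by
    have : (k : ℝ) ≤ 2 * ((k + 1) / 2 : ℕ) := by exact_mod_cast (by omega : k ≤ 2 * ((k + 1) / 2))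
    linarith
  suffices C ^ 2 * (π * (k - 1)) ≤ 4 ^ k * (2 * exp (1 / 6)) by
    rw [← sqrt_sq (by positivity : (0 : ℝ) ≤ 2 ^ k), ← sqrt_mul (by positivity),
      le_sqrt (by positivity) (by positivity), mul_div_assoc', le_div_iff₀ hpos, ← pow_mul,
      mul_comm k 2, pow_mul, show (2 : ℝ) ^ 2 = 4 by norm_num]
    exact this
  calc C ^ 2 * (π * (k - 1)) ≤ 2 * (π * ((k + 1) / 2 : ℕ) * C ^ 2) := by
        linarith [mul_le_mul_of_nonneg_left hj (by positivity : 0 ≤ π * C ^ 2)]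
    _ ≤ 4 ^ k * 2 := by linarith [pi_mul_mul_choose_half_sq_le_four_pow k]
    _ ≤ 4 ^ k * (2 * exp (1 / 6)) := by
        gcongr
        exact le_mul_of_one_le_right zero_le_two (one_le_exp (by norm_num))
end

section
/- A bit string x ∈ {0,1}^n is Pareto optimal for the OneJumpZeroJump_SS problem if and only if |x|₁ ∈ {0, n, k − a, n − k + a} or k ≤ |x|₁ ≤ n − k. -/
open Finset

/-- Number of 1-bits of a bit string `x ∈ {0,1}^n`. -/
def onesCount {n : ℕ} (x : Fin n → Bool) : ℕ :=
  (Finset.univ.filter fun i => x i = true).card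

/-- First objective of the OneJumpZeroJump_SS problem with parameters `k`, `a`. -/
noncomputable def ojzjssF1 (n k a : ℕ) (x : Fin n → Bool) : ℝ :=
  if onesCount x = k - a then 2 * (k : ℝ) + 1 / (n : ℝ)
  else if onesCount x = n - (k - a) then (n : ℝ) - 1 / (n : ℝ)
  else if onesCount x ≤ n - k ∨ x = fun _ => true then (k : ℝ) + onesCount x
  else (n : ℝ) - onesCount x

/-- Second objective of the OneJumpZeroJump_SS problem: `f₂(x) = f₁(x̄)`. -/
noncomputable def ojzjssF2 (n k a : ℕ) (x : Fin n → Bool) : ℝ :=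
  ojzjssF1 n k a fun i => !(x i)

/-- `u` dominates `v` (for maximization of both coordinates). -/
def dominates (u v : ℝ × ℝ) : Prop := v.1 ≤ u.1 ∧ v.2 ≤ u.2 ∧ u ≠ v

/-- `x` is Pareto optimal for OneJumpZeroJump_SS. -/
def ojzjssParetoOptimal (n k a : ℕ) (x : Fin n → Bool) : Prop :=
  ∀ y : Fin n → Bool,
    ¬ dominates (ojzjssF1 n k a y, ojzjssF2 n k a y) (ojzjssF1 n k a x, ojzjssF2 n k a x)

/- ### Auxiliary results -/

/-- The objective values as a function of the number of ones. -/
noncomputable def g1 (n k a : ℕ) (m : ℕ) : ℝ :=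
  if m = k - a then 2 * (k : ℝ) + 1 / (n : ℝ)
  else if m = n - k + a then (n : ℝ) - 1 / (n : ℝ)
  else if m ≤ n - k ∨ m = n then (k : ℝ) + m
  else (n : ℝ) - m

lemma onesCount_le {n : ℕ} (x : Fin n → Bool) : onesCount x ≤ n := by
  have h := Finset.card_filter_le (univ : Finset (Fin n)) (fun i => x i = true)
  simpa [onesCount] using h

lemma onesCount_eq_n_iff {n : ℕ} (x : Fin n → Bool) :
    (x = fun _ => true) ↔ onesCount x = n := by
  constructor
  · rintro rfl; simp [onesCount]
  · intro h
    have hu : (univ.filter fun i => x i = true) = univ := by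
      apply Finset.eq_univ_of_card
      rw [Fintype.card_fin]; exact h
    funext i
    have hi : i ∈ univ.filter fun i => x i = true := hu.symm ▸ Finset.mem_univ i
    exact (Finset.mem_filter.mp hi).2

lemma onesCount_not {n : ℕ} (x : Fin n → Bool) :
    onesCount (fun i => !(x i)) = n - onesCount x := by
  have h := Finset.card_filter_add_card_filter_not
    (s := (univ : Finset (Fin n))) (p := fun i => x i = true)
  have hfe : (univ.filter fun i : Fin n => (!(x i)) = true)
      = (univ.filter fun i : Fin n => ¬ (x i = true)) := by
    apply Finset.filter_congr; intro i _; simp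
  simp only [Finset.card_univ, Fintype.card_fin] at h
  unfold onesCount
  rw [hfe]
  omega

lemma exists_onesCount {n : ℕ} (m : ℕ) (hm : m ≤ n) :
    ∃ y : Fin n → Bool, onesCount y = m := by
  refine ⟨fun i => decide (i.val < m), ?_⟩
  unfold onesCount
  have h1 : (univ.filter fun i : Fin n => decide (i.val < m) = true)
      = (univ.filter fun i : Fin n => i.val < m) := by
    apply Finset.filter_congr; intro i _; simp
  rw [h1, ← Finset.card_image_of_injective _ Fin.val_injective]
  have h2 : ((univ.filter fun i : Fin n => i.val < m).image Fin.val) = Finset.range m := by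
    ext j
    simp only [Finset.mem_image, Finset.mem_filter, Finset.mem_univ, true_and,
      Finset.mem_range]
    constructor
    · rintro ⟨i, hi, rfl⟩; exact hi
    · intro hj; exact ⟨⟨j, lt_of_lt_of_le hj hm⟩, hj, rfl⟩
  rw [h2, Finset.card_range]

lemma f1_eq (n k a : ℕ) (hak : a ≤ k) (hkn : k ≤ n) (x : Fin n → Bool) :
    ojzjssF1 n k a x = g1 n k a (onesCount x) := by
  have h1 : n - (k - a) = n - k + a := by omega
  have h2 : (onesCount x ≤ n - k ∨ x = fun _ => true)
      ↔ (onesCount x ≤ n - k ∨ onesCount x = n) := or_congr_right (onesCount_eq_n_iff x)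
  simp only [ojzjssF1, g1, h1, h2]

lemma f2_eq (n k a : ℕ) (hak : a ≤ k) (hkn : k ≤ n) (x : Fin n → Bool) :
    ojzjssF2 n k a x = g1 n k a (n - onesCount x) := by
  rw [ojzjssF2, f1_eq n k a hak hkn, onesCount_not]

section vals
variable {n k a : ℕ}

lemma g1_low (hkn : 2 * k < n) (ha : 2 ≤ a) (hak : a < k)
    {m : ℕ} (h0 : m < k) (h1 : m ≠ k - a) :
    g1 n k a m = (k : ℝ) + m := by
  unfold g1
  rw [if_neg h1, if_neg (by omega), if_pos (by omega : m ≤ n - k ∨ m = n)]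

lemma g1_mid (ha : 2 ≤ a) (hak : a < k)
    {m : ℕ} (h0 : k ≤ m) (h1 : m ≤ n - k) :
    g1 n k a m = (k : ℝ) + m := by
  unfold g1
  rw [if_neg (by omega), if_neg (by omega), if_pos (by omega : m ≤ n - k ∨ m = n)]

lemma g1_high (hkn : 2 * k < n) (ha : 2 ≤ a) (hak : a < k)
    {m : ℕ} (h0 : n - k < m) (h2 : m < n) (h1 : m ≠ n - k + a) :
    g1 n k a m = (n : ℝ) - m := by
  unfold g1
  rw [if_neg (by omega), if_neg h1, if_neg (by omega : ¬(m ≤ n - k ∨ m = n))]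

lemma g1_n (hkn : 2 * k < n) (hak : a < k) :
    g1 n k a n = (k : ℝ) + n := by
  unfold g1
  rw [if_neg (by omega), if_neg (by omega), if_pos (by omega : n ≤ n - k ∨ n = n)]

lemma g1_jumpL : g1 n k a (k - a) = 2 * (k : ℝ) + 1 / n := by
  unfold g1
  rw [if_pos rfl]

lemma g1_jumpR (hkn : 2 * k < n) (ha : 2 ≤ a) :
    g1 n k a (n - k + a) = (n : ℝ) - 1 / n := by
  unfold g1
  rw [if_neg (by omega), if_pos rfl]

lemma g1_sum_eq (hk : 3 ≤ k) (hkn : 2 * k < n) (ha : 2 ≤ a) (hak : a < k)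
    {m : ℕ} (hm : m ≤ n)
    (hfront : m = 0 ∨ m = n ∨ m = k - a ∨ m = n - k + a ∨ (k ≤ m ∧ m ≤ n - k)) :
    g1 n k a m + g1 n k a (n - m) = (n : ℝ) + 2 * k := by
  have hc : ((n - m : ℕ) : ℝ) = (n : ℝ) - m := by
    rw [Nat.cast_sub hm]
  rcases hfront with h | h | h | h | ⟨h1, h2⟩
  · subst h
    rw [g1_low hkn ha hak (by omega) (by omega), Nat.sub_zero, g1_n hkn hak]
    push_cast; ring
  · subst h
    rw [g1_n hkn hak, Nat.sub_self, g1_low hkn ha hak (by omega) (by omega)]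
    push_cast; ring
  · subst h
    rw [g1_jumpL, (by omega : n - (k - a) = n - k + a), g1_jumpR hkn ha]
    ring
  · subst h
    rw [g1_jumpR hkn ha, (by omega : n - (n - k + a) = k - a), g1_jumpL]
    ring
  · rw [g1_mid ha hak h1 h2, g1_mid ha hak (by omega) (by omega), hc]
    ring

lemma g1_sum_le (hk : 3 ≤ k) (hkn : 2 * k < n) (ha : 2 ≤ a) (hak : a < k)
    {m : ℕ} (hm : m ≤ n) :
    g1 n k a m + g1 n k a (n - m) ≤ (n : ℝ) + 2 * k := by
  have hc : ((n - m : ℕ) : ℝ) = (n : ℝ) - m := by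
    rw [Nat.cast_sub hm]
  have hck : (k : ℝ) < n := by exact_mod_cast (by omega : k < n)
  have hcases : (0 < m ∧ m < k ∧ m ≠ k - a) ∨ (n - k < m ∧ m < n ∧ m ≠ n - k + a) ∨
      (m = 0 ∨ m = n ∨ m = k - a ∨ m = n - k + a ∨ (k ≤ m ∧ m ≤ n - k)) := by omega
  rcases hcases with ⟨h0, h1, h2⟩ | ⟨h0, h1, h2⟩ | h
  · rw [g1_low hkn ha hak h1 h2,
      g1_high hkn ha hak (by omega) (by omega) (by omega), hc]
    have : (m : ℝ) < k := by exact_mod_cast h1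
    linarith
  · rw [g1_high hkn ha hak h0 h1 h2,
      g1_low hkn ha hak (by omega) (by omega), hc]
    have : ((n : ℝ) - m) < k := by
      rw [← hc]; exact_mod_cast (by omega : n - m < k)
    linarith
  · exact le_of_eq (g1_sum_eq hk hkn ha hak hm h)

end vals

/-- A bit string `x ∈ {0,1}^n` is Pareto optimal for OneJumpZeroJump_SS
(with `3 ≤ k < n/2` and `2 ≤ a < k`) iff `|x|₁ ∈ {0, n, k − a, n − k + a}`
or `k ≤ |x|₁ ≤ n − k`. -/
theorem ojzjss_pareto_optimal_iff (n k a : ℕ) (hk : 3 ≤ k) (hkn : 2 * k < n)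
    (ha : 2 ≤ a) (hak : a < k) (x : Fin n → Bool) :
    ojzjssParetoOptimal n k a x ↔
      onesCount x = 0 ∨ onesCount x = n ∨ onesCount x = k - a ∨ onesCount x = n - k + a ∨
        (k ≤ onesCount x ∧ onesCount x ≤ n - k) := by
  have hak' : a ≤ k := hak.le
  have hkn' : k ≤ n := by omega
  have hmx : onesCount x ≤ n := onesCount_le x
  have hx1 : ojzjssF1 n k a x = g1 n k a (onesCount x) := f1_eq n k a hak' hkn' x
  have hx2 : ojzjssF2 n k a x = g1 n k a (n - onesCount x) := f2_eq n k a hak' hkn' x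
  constructor
  · intro hp
    by_contra hnot
    push_neg at hnot
    obtain ⟨h0, h1, h2, h3, h4⟩ := hnot
    have hcases : (0 < onesCount x ∧ onesCount x < k ∧ onesCount x ≠ k - a) ∨
        (n - k < onesCount x ∧ onesCount x < n ∧ onesCount x ≠ n - k + a) := by
      rcases Nat.lt_or_ge (onesCount x) k with h | h
      · exact Or.inl ⟨by omega, h, h2⟩
      · exact Or.inr ⟨h4 h, by omega, h3⟩
    rcases hcases with ⟨hm0, hm1, hm2⟩ | ⟨hm0, hm1, hm2⟩
    · -- x has 0 < |x|₁ < k ; it is dominated by any y with |y|₁ = k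
      obtain ⟨y, hy⟩ := exists_onesCount k hkn'
      have hy1 : ojzjssF1 n k a y = (k : ℝ) + k := by
        rw [f1_eq n k a hak' hkn' y, hy, g1_mid ha hak le_rfl (by omega)]
      have hy2 : ojzjssF2 n k a y = (n : ℝ) := by
        rw [f2_eq n k a hak' hkn' y, hy, g1_mid ha hak (by omega) le_rfl,
          Nat.cast_sub hkn']
        ring
      have hxv1 : ojzjssF1 n k a x = (k : ℝ) + onesCount x := by
        rw [hx1, g1_low hkn ha hak hm1 hm2]
      have hxv2 : ojzjssF2 n k a x = (onesCount x : ℝ) := by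
        rw [hx2, g1_high hkn ha hak (by omega) (by omega) (by omega),
          Nat.cast_sub hmx]
        ring
      have hmr : (onesCount x : ℝ) < k := by exact_mod_cast hm1
      have hnr : (k : ℝ) < n := by exact_mod_cast (by omega : k < n)
      refine hp y ⟨?_, ?_, ?_⟩
      · show ojzjssF1 n k a x ≤ ojzjssF1 n k a y
        rw [hy1, hxv1]; linarith
      · show ojzjssF2 n k a x ≤ ojzjssF2 n k a y
        rw [hy2, hxv2]; linarith
      · intro hc
        have := congrArg Prod.fst hc
        simp only at this
        rw [hy1, hxv1] at this
        linarith
    · -- x has n - k < |x|₁ < n ; it is dominated by any y with |y|₁ = n - k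
      obtain ⟨y, hy⟩ := exists_onesCount (n := n) (n - k) (by omega)
      have hy1 : ojzjssF1 n k a y = (n : ℝ) := by
        rw [f1_eq n k a hak' hkn' y, hy, g1_mid ha hak (by omega) le_rfl,
          Nat.cast_sub hkn']
        ring
      have hy2 : ojzjssF2 n k a y = (k : ℝ) + k := by
        rw [f2_eq n k a hak' hkn' y, hy, (by omega : n - (n - k) = k),
          g1_mid ha hak le_rfl (by omega)]
      have hxv1 : ojzjssF1 n k a x = (n : ℝ) - onesCount x := by
        rw [hx1, g1_high hkn ha hak hm0 hm1 hm2]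
      have hxv2 : ojzjssF2 n k a x = (k : ℝ) + ((n : ℝ) - onesCount x) := by
        rw [hx2, g1_low (m := n - onesCount x) hkn ha hak (by omega) (by omega),
          Nat.cast_sub hmx]
      have hmr : (n : ℝ) - onesCount x < k := by
        rw [← Nat.cast_sub hmx]
        exact_mod_cast (by omega : n - onesCount x < k)
      have hmr0 : (0 : ℝ) < onesCount x := by exact_mod_cast (by omega : 0 < onesCount x)
      refine hp y ⟨?_, ?_, ?_⟩
      · show ojzjssF1 n k a x ≤ ojzjssF1 n k a y
        rw [hy1, hxv1]; linarith
      · show ojzjssF2 n k a x ≤ ojzjssF2 n k a y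
        rw [hy2, hxv2]; linarith
      · intro hc
        have := congrArg Prod.snd hc
        simp only at this
        rw [hy2, hxv2] at this
        linarith
  · intro hfront y hdom
    obtain ⟨hd1, hd2, hdne⟩ := hdom
    have hmy : onesCount y ≤ n := onesCount_le y
    have hy1 : ojzjssF1 n k a y = g1 n k a (onesCount y) := f1_eq n k a hak' hkn' y
    have hy2 : ojzjssF2 n k a y = g1 n k a (n - onesCount y) := f2_eq n k a hak' hkn' y
    have hsx : ojzjssF1 n k a x + ojzjssF2 n k a x = (n : ℝ) + 2 * k := by
      rw [hx1, hx2]; exact g1_sum_eq hk hkn ha hak hmx hfront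
    have hsy : ojzjssF1 n k a y + ojzjssF2 n k a y ≤ (n : ℝ) + 2 * k := by
      rw [hy1, hy2]; exact g1_sum_le hk hkn ha hak hmy
    have hd1' : ojzjssF1 n k a x ≤ ojzjssF1 n k a y := hd1
    have hd2' : ojzjssF2 n k a x ≤ ojzjssF2 n k a y := hd2
    rcases hd1'.lt_or_eq with h | h
    · linarith
    · rcases hd2'.lt_or_eq with h' | h'
      · linarith
      · exact hdne (Prod.ext_iff.mpr ⟨h.symm, h'.symm⟩)
end
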